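/- Let η₁, …, η_N be i.i.d. nonnegative random variables with CDF F(x) = c₀ x^τ + o(x^τ) as x → 0⁺, where τ > 0, c₀ > 0. For S ≤ N, let η_(1) ≤ ⋯ ≤ η_(S) be the S smallest order statistics. If N = N(ρ) is a function of ρ > 0 with N(ρ)/ρ^τ → ∞ as ρ → ∞, then for any ε > 0, Pr{ Σ_{j=1}^S η_(j) ≤ ε/ρ } → 1 as ρ → ∞. -/

import Mathlib

/-!
Put δ = ε / (S ρ). As soon as at least S of the N samples lie in (-∞, δ], the sum of the S
smallest ones is at most S δ = ε / ρ. The number of such samples is a sum of pairwise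
independent Bernoulli(F δ) indicators, so its variance is at most its mean N F(δ), and
N F(δ) ~ c₀ (ε / S)^τ N / ρ^τ → ∞. Chebyshev's inequality then makes the count at least S with
probability tending to 1.
-/

open MeasureTheory ProbabilityTheory Filter Finset Topology

section Counting

variable {Ω : Type*} {mΩ : MeasurableSpace Ω} {μ : Measure Ω} [IsProbabilityMeasure μ]

lemma variance_indicator_one_le {A : Set Ω} (hA : MeasurableSet A) :
    Var[A.indicator 1; μ] ≤ μ.real A := by
  have hsq : A.indicator (1 : Ω → ℝ) ^ 2 = A.indicator 1 := by
    ext ω; by_cases h : ω ∈ A <;> simp [h]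
  calc Var[A.indicator 1; μ] ≤ μ[A.indicator 1 ^ 2] :=
        variance_le_expectation_sq (measurable_one.indicator hA).aestronglyMeasurable
    _ = μ.real A := by rw [hsq, integral_indicator_one hA]

variable {η : ℕ → Ω → ℝ} {μ₀ : Measure ℝ}

open scoped Classical in
lemma measurable_card_filter_mem (hη : ∀ i, Measurable (η i)) {B : Set ℝ}
    (hB : MeasurableSet B) (s : Finset ℕ) :
    Measurable fun ω => #{i ∈ s | η i ω ∈ B} := by
  simp only [card_filter]
  exact Finset.measurable_sum _ fun i _ =>
    Measurable.ite (hη i hB) measurable_const measurable_const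

open scoped Classical in
lemma measure_card_filter_lt_le (hη : ∀ i, Measurable (η i))
    (hindep : Pairwise fun i j => IndepFun (η i) (η j) μ)
    (hdist : ∀ i, μ.map (η i) = μ₀) {B : Set ℝ} (hB : MeasurableSet B) {n S : ℕ}
    (hS : S < n * μ₀.real B) :
    μ {ω | #{i ∈ range n | η i ω ∈ B} < S}
      ≤ ENNReal.ofReal (n * μ₀.real B / (n * μ₀.real B - S) ^ 2) := by
  set m := n * μ₀.real B
  set Y : ℕ → Ω → ℝ := fun i => (η i ⁻¹' B).indicator 1
  have hYcomp i : Y i = B.indicator 1 ∘ η i := by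
    ext ω; by_cases h : η i ω ∈ B <;> simp [Y, h]
  have hA i : MeasurableSet (η i ⁻¹' B) := hη i hB
  have hY i : MemLp (Y i) 2 μ := (memLp_const 1).indicator (hA i)
  have hprob i : μ.real (η i ⁻¹' B) = μ₀.real B := by
    rw [← hdist i, map_measureReal_apply (hη i) hB]
  have hcount ω : ∑ i ∈ range n, Y i ω = #{i ∈ range n | η i ω ∈ B} := by
    rw [natCast_card_filter]; simp [Y, Set.indicator_apply]
  have hmean : μ[∑ i ∈ range n, Y i] = m := by
    simp [integral_finsetSum _ fun i _ => (hY i).integrable one_le_two, Y,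
      integral_indicator_one (hA _), hprob, m]
  have hvar : Var[∑ i ∈ range n, Y i; μ] ≤ m := by
    have hindepY : Set.Pairwise ↑(range n) fun i j => IndepFun (Y i) (Y j) μ :=
      fun i _ j _ hij => by
        simp only [hYcomp]
        exact (hindep hij).comp (measurable_one.indicator hB) (measurable_one.indicator hB)
    rw [IndepFun.variance_sum (fun i _ => hY i) hindepY]
    calc ∑ i ∈ range n, Var[Y i; μ] ≤ ∑ i ∈ range n, μ₀.real B :=
          sum_le_sum fun i _ => hprob i ▸ variance_indicator_one_le (hA i)
      _ = m := by simp [m]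
  have hsub : {ω | #{i ∈ range n | η i ω ∈ B} < S}
      ⊆ {ω | m - S ≤ |(∑ i ∈ range n, Y i) ω - μ[∑ i ∈ range n, Y i]|} := by
    intro ω hω
    have hlt : ((∑ i ∈ range n, Y i) ω) < S := by
      rw [Finset.sum_apply, hcount]; exact_mod_cast hω
    simp only [Set.mem_ofPred_eq, hmean]
    linarith [neg_abs_le ((∑ i ∈ range n, Y i) ω - m)]
  calc μ {ω | #{i ∈ range n | η i ω ∈ B} < S}
      ≤ ENNReal.ofReal (Var[∑ i ∈ range n, Y i; μ] / (m - S) ^ 2) :=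
        (measure_mono hsub).trans <|
          meas_ge_le_variance_div_sq (memLp_finsetSum' _ fun i _ => hY i) (by linarith)
    _ ≤ ENNReal.ofReal (m / (m - S) ^ 2) := by gcongr

open scoped Classical in
lemma tendsto_measure_le_card_filter {ι : Type*} {l : Filter ι} {n : ι → ℕ} {B : ι → Set ℝ}
    (hη : ∀ i, Measurable (η i)) (hindep : Pairwise fun i j => IndepFun (η i) (η j) μ)
    (hdist : ∀ i, μ.map (η i) = μ₀) (hB : ∀ k, MeasurableSet (B k)) (S : ℕ)
    (hmean : Tendsto (fun k => n k * μ₀.real (B k)) l atTop) :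
    Tendsto (fun k => μ {ω | S ≤ #{i ∈ range (n k) | η i ω ∈ B k}}) l (𝓝 1) := by
  have hbad : Tendsto (fun k => μ {ω | #{i ∈ range (n k) | η i ω ∈ B k} < S}) l (𝓝 0) := by
    have h4 : Tendsto (fun k => ENNReal.ofReal (4 / (n k * μ₀.real (B k)))) l (𝓝 0) := by
      simpa using ENNReal.tendsto_ofReal (tendsto_const_nhds.div_atTop hmean)
    refine tendsto_of_tendsto_of_tendsto_of_le_of_le' tendsto_const_nhds h4
      (Eventually.of_forall fun _ => zero_le) ?_
    filter_upwards [hmean.eventually_ge_atTop (2 * S), hmean.eventually_gt_atTop 0]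
      with k h2S hpos
    set m := n k * μ₀.real (B k)
    refine (measure_card_filter_lt_le hη hindep hdist (hB k) (by linarith)).trans
      (ENNReal.ofReal_le_ofReal ?_)
    calc m / (m - S) ^ 2 ≤ m / (m / 2) ^ 2 := by gcongr; linarith
      _ = 4 / m := by field_simp; ring
  have hcompl k : μ {ω | S ≤ #{i ∈ range (n k) | η i ω ∈ B k}}
      = 1 - μ {ω | #{i ∈ range (n k) | η i ω ∈ B k} < S} := by
    have hmeas : MeasurableSet {ω | #{i ∈ range (n k) | η i ω ∈ B k} < S} :=
      measurable_card_filter_mem hη (hB k) _ measurableSet_Iio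
    rw [← prob_compl_eq_one_sub hmeas]
    simp only [Set.compl_ofPred, not_lt]
  simpa [hcompl] using ENNReal.Tendsto.sub tendsto_const_nhds hbad (Or.inl ENNReal.one_ne_top)

end Counting

lemma sInf_sum_image_le_of_le_card_filter {ι : Type*} (x : ι → ℝ) (s : Finset ι) {S : ℕ}
    {δ : ℝ} (h : S ≤ #{i ∈ s | x i ≤ δ}) :
    sInf ((fun T => ∑ i ∈ T, x i) '' {T | T ⊆ s ∧ #T = S}) ≤ S * δ := by
  obtain ⟨T, hT, hTcard⟩ := exists_subset_card_eq h
  have hfin : {T | T ⊆ s ∧ #T = S}.Finite :=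
    s.powerset.finite_toSet.subset fun T hT => mem_powerset.2 hT.1
  calc sInf ((fun T => ∑ i ∈ T, x i) '' {T | T ⊆ s ∧ #T = S})
      ≤ ∑ i ∈ T, x i :=
        csInf_le (hfin.image _).bddBelow ⟨T, ⟨hT.trans (filter_subset _ _), hTcard⟩, rfl⟩
    _ ≤ #T • δ := sum_le_card_nsmul T _ _ fun i hi => (mem_filter.1 (hT hi)).2
    _ = S * δ := by rw [hTcard, nsmul_eq_mul]

lemma tendsto_mul_comp_div_atTop {N F : ℝ → ℝ} {τ c₀ a : ℝ} (hc₀ : 0 < c₀) (ha : 0 < a)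
    (hF : Tendsto (fun x => F x / x ^ τ) (𝓝[>] 0) (𝓝 c₀))
    (hN : Tendsto (fun ρ => N ρ / ρ ^ τ) atTop atTop) :
    Tendsto (fun ρ => N ρ * F (a / ρ)) atTop atTop := by
  have hδ : Tendsto (fun ρ => a / ρ) atTop (𝓝[>] 0) :=
    tendsto_nhdsWithin_iff.2 ⟨tendsto_const_nhds.div_atTop tendsto_id,
      (eventually_gt_atTop 0).mono fun ρ hρ => div_pos ha hρ⟩
  have hlim := hN.atTop_mul_pos (by positivity : 0 < c₀ * a ^ τ)
    ((hF.comp hδ).mul_const (a ^ τ))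
  refine hlim.congr' ((eventually_gt_atTop 0).mono fun ρ hρ => ?_)
  have hρτ : 0 < ρ ^ τ := Real.rpow_pos_of_pos hρ τ
  have haτ : 0 < a ^ τ := Real.rpow_pos_of_pos ha τ
  simp only [Function.comp_apply, Real.div_rpow ha.le hρ.le]
  field_simp

theorem sum_smallest_order_statistics_tendsto_one_general
    {Ω : Type*} [MeasureSpace Ω] [IsProbabilityMeasure (ℙ : Measure Ω)]
    (η : ℕ → Ω → ℝ) (hη : ∀ i, Measurable (η i))
    (hindep : iIndepFun η ℙ)
    (μ₀ : Measure ℝ) (hdist : ∀ i, Measure.map (η i) ℙ = μ₀)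
    (c₀ τ : ℝ) (hc₀ : 0 < c₀)
    (F : ℝ → ℝ) (hF : ∀ x, F x = (μ₀ (Set.Iic x)).toReal)
    (hCDF : Tendsto (fun x => F x / x ^ τ) (nhdsWithin 0 (Set.Ioi 0)) (nhds c₀))
    (S : ℕ) (hS : 0 < S) (N : ℝ → ℕ)
    (hN : Tendsto (fun ρ => (N ρ : ℝ) / ρ ^ τ) atTop atTop) :
    ∀ ε : ℝ, 0 < ε →
      Tendsto
        (fun ρ => ℙ {ω |
          sInf ((fun T : Finset ℕ => ∑ i ∈ T, η i ω) ''
              {T | T ⊆ Finset.range (N ρ) ∧ T.card = S}) ≤ ε / ρ})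
        atTop (nhds 1) := by
  intro ε hε
  obtain rfl : F = fun x => μ₀.real (Set.Iic x) := funext hF
  have hS' : (0 : ℝ) < S := by exact_mod_cast hS
  have hgood := tendsto_measure_le_card_filter (μ := ℙ) hη (fun _ _ hij => hindep.indepFun hij)
    hdist (fun _ => measurableSet_Iic) S
    (tendsto_mul_comp_div_atTop hc₀ (div_pos hε hS') hCDF hN)
  refine tendsto_of_tendsto_of_tendsto_of_le_of_le hgood tendsto_const_nhds
    (fun ρ => measure_mono fun ω hω => ?_) fun _ => prob_le_one
  have hcount : S ≤ #{i ∈ range (N ρ) | η i ω ≤ ε / S / ρ} := by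
    simpa only [Set.mem_ofPred_eq, Set.mem_Iic] using hω
  calc _ ≤ S * (ε / S / ρ) := sInf_sum_image_le_of_le_card_filter _ _ hcount
    _ = ε / ρ := by field_simp

/-- Key user-scaling lemma.  Let `η i` be i.i.d. nonnegative random variables with common
CDF `F(x) = c₀ x^τ + o(x^τ)` as `x → 0⁺` (encoded as `F(x)/x^τ → c₀`), `c₀, τ > 0`.  For
`S ≤ N(ρ)` users, let the sum of the `S` smallest order statistics among the first `N(ρ)`
samples be `inf { Σ_{i∈T} η i : T ⊆ range N(ρ), |T| = S }`.  If `N(ρ)/ρ^τ → ∞`, then for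
every `ε > 0` the probability that this sum is at most `ε/ρ` tends to `1` as `ρ → ∞`. -/
theorem sum_smallest_order_statistics_tendsto_one
    {Ω : Type*} [MeasureSpace Ω] [IsProbabilityMeasure (ℙ : Measure Ω)]
    (η : ℕ → Ω → ℝ) (hη : ∀ i, Measurable (η i)) (hηpos : ∀ i ω, 0 ≤ η i ω)
    (hindep : iIndepFun η ℙ)
    (μ₀ : Measure ℝ) (hdist : ∀ i, Measure.map (η i) ℙ = μ₀)
    (c₀ τ : ℝ) (hc₀ : 0 < c₀) (hτ : 0 < τ)
    (F : ℝ → ℝ) (hF : ∀ x, F x = (μ₀ (Set.Iic x)).toReal)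
    (hCDF : Tendsto (fun x => F x / x ^ τ) (nhdsWithin 0 (Set.Ioi 0)) (nhds c₀))
    (S : ℕ) (hS : 0 < S) (N : ℝ → ℕ) (hSN : ∀ ρ, S ≤ N ρ)
    (hN : Tendsto (fun ρ => (N ρ : ℝ) / ρ ^ τ) atTop atTop) :
    ∀ ε : ℝ, 0 < ε →
      Tendsto
        (fun ρ => ℙ {ω |
          sInf ((fun T : Finset ℕ => ∑ i ∈ T, η i ω) ''
              {T | T ⊆ Finset.range (N ρ) ∧ T.card = S}) ≤ ε / ρ})
        atTop (nhds 1) :=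
  sum_smallest_order_statistics_tendsto_one_general η hη hindep μ₀ hdist c₀ τ hc₀ F hF hCDF S hS N
    hN
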